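/- arXiv:2201.11434 — 5 statements merged into one kernel-verified Lean document; each statement's English description precedes it below -/
import Mathlib

section
/- If t ∈ (0, 1/2] is a Γ-periodic point with Γ(t) ≠ t (i.e., t is periodic but not fixed under Γ), then the point of the orbit of t closest to 1/3 belongs to the interval (1/4, 5/12). -/
/-- The length function `Γ(t) = dist(3t, ℤ)`. -/
noncomputable def GammaFn (t : ℝ) : ℝ := |3 * t - round (3 * t)|

lemma gamma_low {s : ℝ} (h0 : 0 ≤ s) (h1 : s < 1/6) : GammaFn s = 3 * s := by
  have hr : round (3 * s) = 0 := by
    rw [round_eq, Int.floor_eq_iff]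
    constructor <;> push_cast <;> linarith
  rw [GammaFn, hr]
  push_cast
  rw [sub_zero, abs_of_nonneg (by linarith)]

lemma gamma_mid {s : ℝ} (h0 : 1/6 ≤ s) (h1 : s < 1/2) : GammaFn s = |3 * s - 1| := by
  have hr : round (3 * s) = 1 := by
    rw [round_eq, Int.floor_eq_iff]
    constructor <;> push_cast <;> linarith
  rw [GammaFn, hr]
  norm_num

lemma gamma_zero : GammaFn 0 = 0 := by
  rw [gamma_low le_rfl (by norm_num)]; ring

lemma gamma_quarter : GammaFn (1/4) = 1/4 := by
  rw [gamma_mid (by norm_num) (by norm_num), abs_of_nonpos (by norm_num)]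
  norm_num

lemma gamma_half : GammaFn (1/2) = 1/2 := by
  have hr : round ((3:ℝ) * (1/2)) = 2 := by
    rw [round_eq, Int.floor_eq_iff]
    constructor <;> push_cast <;> norm_num
  rw [GammaFn, hr, abs_of_nonpos (by push_cast; norm_num)]
  push_cast; norm_num

lemma gamma_sixth : GammaFn (1/6) = 1/2 := by
  rw [gamma_mid le_rfl (by norm_num), abs_of_nonpos (by norm_num)]
  norm_num

lemma gamma_512 : GammaFn (5/12) = 1/4 := by
  rw [gamma_mid (by norm_num) (by norm_num), abs_of_nonneg (by norm_num)]
  norm_num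

lemma eventually_fixed {t c : ℝ} (hc : GammaFn c = c) {k : ℕ} (hk : 1 ≤ k)
    (hper : GammaFn^[k] t = t) {j : ℕ} (hj : GammaFn^[j] t = c) : t = c := by
  have hmul : ∀ n, GammaFn^[k * n] t = t := by
    intro n; induction n with
    | zero => simp
    | succ n ih => rw [Nat.mul_succ, Function.iterate_add_apply, hper, ih]
  have hjle : j ≤ k * (j + 1) := by
    calc j ≤ j + 1 := Nat.le_succ j
    _ = 1 * (j + 1) := (one_mul _).symm
    _ ≤ k * (j + 1) := Nat.mul_le_mul_right _ hk
  have h := hmul (j + 1)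
  rw [show k * (j + 1) = (k * (j + 1) - j) + j from (Nat.sub_add_cancel hjle).symm,
      Function.iterate_add_apply, hj, Function.iterate_fixed hc] at h
  exact h.symm

/-- if `t ∈ (0, 1/2]` is `Γ`-periodic but not fixed, then the point of the
orbit of `t` closest to `1/3` belongs to `(1/4, 5/12)`. -/
theorem closest_to_third_mem_Ioo (t : ℝ) (ht0 : 0 < t) (ht : t ≤ 1/2)
    (hper : ∃ k : ℕ, 1 ≤ k ∧ GammaFn^[k] t = t) (hnotfix : GammaFn t ≠ t)
    (i : ℕ) (hclosest : ∀ j : ℕ, |GammaFn^[i] t - 1/3| ≤ |GammaFn^[j] t - 1/3|) :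
    GammaFn^[i] t ∈ Set.Ioo (1/4 : ℝ) (5/12) := by
  obtain ⟨k, hk1, hk⟩ := hper
  -- basic bounds on the orbit
  have hnn : ∀ j, 0 ≤ GammaFn^[j] t := by
    intro j; cases j with
    | zero => simpa using ht0.le
    | succ n => rw [Function.iterate_succ_apply']; exact abs_nonneg _
  have hub : ∀ j, GammaFn^[j] t ≤ 1/2 := by
    intro j; cases j with
    | zero => simpa using ht
    | succ n =>
      rw [Function.iterate_succ_apply', GammaFn]
      exact abs_sub_round _
  -- the orbit avoids fixed points
  have hfix : ∀ j (c : ℝ), GammaFn c = c → GammaFn^[j] t = c → False := by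
    intro j c hc hj
    have h := eventually_fixed hc hk1 hk hj
    exact hnotfix (by rw [h, hc])
  have hq : ∀ j, GammaFn^[j] t ≠ 1/4 := fun j h => hfix j _ gamma_quarter h
  have hh : ∀ j, GammaFn^[j] t ≠ 1/2 := fun j h => hfix j _ gamma_half h
  have h512 : ∀ j, GammaFn^[j] t ≠ 5/12 := by
    intro j h
    exact hfix (j + 1) _ gamma_quarter
      (by rw [Function.iterate_succ_apply', h]; exact gamma_512)
  have h16 : ∀ j, GammaFn^[j] t ≠ 1/6 := by
    intro j h
    exact hfix (j + 1) _ gamma_half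
      (by rw [Function.iterate_succ_apply', h]; exact gamma_sixth)
  -- key: some orbit point lies in (1/4, 5/12)
  have hEx : ∃ j, GammaFn^[j] t ∈ Set.Ioo (1/4 : ℝ) (5/12) := by
    by_contra hEx
    push_neg at hEx
    simp only [Set.mem_Ioo, not_and, not_lt] at hEx
    have havoid : ∀ j, GammaFn^[j] t < 1/4 ∨ 5/12 < GammaFn^[j] t := by
      intro j
      rcases lt_trichotomy (GammaFn^[j] t) (1/4 : ℝ) with h | h | h
      · exact Or.inl h
      · exact absurd h (hq j)
      · exact Or.inr (lt_of_le_of_ne (hEx j h) (Ne.symm (h512 j)))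
    -- one step in the right region
    have hstep : ∀ j, 5/12 < GammaFn^[j] t →
        5/12 < GammaFn^[j+1] t ∧ 1/2 - GammaFn^[j+1] t = 3 * (1/2 - GammaFn^[j] t) := by
      intro j hj
      have hlt : GammaFn^[j] t < 1/2 := lt_of_le_of_ne (hub j) (hh j)
      have heq : GammaFn^[j+1] t = 3 * GammaFn^[j] t - 1 := by
        rw [Function.iterate_succ_apply', gamma_mid (by linarith) hlt,
          abs_of_nonneg (by linarith)]
      refine ⟨?_, by rw [heq]; ring⟩
      rcases havoid (j + 1) with h | h
      · exfalso; rw [heq] at h; linarith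
      · exact h
    have hiter : ∀ j, 5/12 < GammaFn^[j] t → ∀ n,
        1/2 - GammaFn^[j+n] t = 3^n * (1/2 - GammaFn^[j] t) ∧ 5/12 < GammaFn^[j+n] t := by
      intro j hj n
      induction n with
      | zero =>
        simp only [Nat.add_zero, pow_zero, one_mul]
        exact ⟨trivial, hj⟩
      | succ n ih =>
        obtain ⟨ih1, ih2⟩ := ih
        obtain ⟨h1, h2⟩ := hstep (j + n) ih2
        have hidx : j + (n + 1) = (j + n) + 1 := by ring
        rw [hidx]
        exact ⟨by rw [h2, ih1, pow_succ]; ring, h1⟩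
    have hnoright : ∀ j, ¬ (5/12 < GammaFn^[j] t) := by
      intro j hj
      have hεpos : 0 < 1/2 - GammaFn^[j] t := by
        have := lt_of_le_of_ne (hub j) (hh j); linarith
      obtain ⟨n, hn⟩ := pow_unbounded_of_one_lt ((1/12) / (1/2 - GammaFn^[j] t))
        (by norm_num : (1:ℝ) < 3)
      obtain ⟨h1, h2⟩ := hiter j hj n
      have hsmall : 3^n * (1/2 - GammaFn^[j] t) < 1/12 := by
        rw [← h1]; linarith [hub (j + n)]
      rw [div_lt_iff₀ hεpos] at hn
      linarith
    have hlow : ∀ j, GammaFn^[j] t < 1/6 := by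
      intro j
      have h1 : GammaFn^[j] t < 1/4 := (havoid j).resolve_right (hnoright j)
      rcases lt_trichotomy (GammaFn^[j] t) (1/6 : ℝ) with h | h | h
      · exact h
      · exact absurd h (h16 j)
      · exfalso
        have heq : GammaFn^[j+1] t = 1 - 3 * GammaFn^[j] t := by
          rw [Function.iterate_succ_apply', gamma_mid h.le (by linarith),
            abs_of_nonpos (by linarith)]
          ring
        have hlt := (havoid (j + 1)).resolve_right (hnoright (j + 1))
        rw [heq] at hlt
        linarith
    have hpow : ∀ n, GammaFn^[n] t = 3^n * t := by
      intro n; induction n with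
      | zero => simp
      | succ n ih =>
        rw [Function.iterate_succ_apply', gamma_low (hnn n) (hlow n), ih, pow_succ]
        ring
    obtain ⟨n, hn⟩ := pow_unbounded_of_one_lt ((1/6) / t) (by norm_num : (1:ℝ) < 3)
    have hl := hlow n
    rw [hpow n] at hl
    rw [div_lt_iff₀ ht0] at hn
    linarith
  obtain ⟨j, hj1, hj2⟩ := hEx
  have hc := hclosest j
  have h1 : |GammaFn^[j] t - 1/3| < 1/12 := abs_lt.mpr ⟨by linarith, by linarith⟩
  have h2 : |GammaFn^[i] t - 1/3| < 1/12 := lt_of_le_of_lt hc h1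
  rw [abs_lt] at h2
  exact ⟨by linarith [h2.1], by linarith [h2.2]⟩
end

section
/- For any nondegenerate chord ℓ of the unit circle (under the tripling map σ₃), there exists n ≥ 0 such that ‖σ₃ⁿ(ℓ)‖ ≥ 1/4. -/
/-- The length of the chord of `ℝ/ℤ` with endpoints `a`, `b`. -/
noncomputable def chordLen (a b : UnitAddCircle) : ℝ := ‖a - b‖

/-! While `‖x‖ ≤ p/6`, tripling multiplies the length exactly by `3`; on `[p/6, p/4]` one
tripling already lands at length `p - 3‖x‖ ≥ p/4`. Hence a chord whose iterates all stay
shorter than `p/4` would have length `3ⁿ‖x‖ < p/4` for all `n`, forcing `x = 0`. -/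

namespace AddCircle

variable {p : ℝ}

theorem exists_coe_eq_and_abs_eq_norm (x : AddCircle p) :
    ∃ t : ℝ, (t : AddCircle p) = x ∧ |t| = ‖x‖ := by
  induction x using QuotientAddGroup.induction_on with
  | H s =>
    refine ⟨s - round (p⁻¹ * s) * p, ?_, (norm_eq p).symm⟩
    simp [← zsmul_eq_mul, coe_period]

theorem norm_coe_of_half_period_le_abs (hp : 0 < p) {s : ℝ} (h₁ : p / 2 ≤ |s|)
    (h₂ : |s| ≤ p) : ‖(s : AddCircle p)‖ = p - |s| := by
  wlog hs : 0 ≤ s generalizing s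
  · rw [← abs_neg] at h₁ h₂ ⊢
    rw [← this h₁ h₂ (by linarith), coe_neg, norm_neg]
  rw [abs_of_nonneg hs] at h₁ h₂ ⊢
  have hshift : ((s - p : ℝ) : AddCircle p) = s := by
    rw [coe_sub, coe_period, sub_zero]
  have hclose : |s - p| = p - s := by rw [abs_of_nonpos (by linarith), neg_sub]
  rw [← hshift, (norm_coe_eq_abs_iff p hp.ne').2 (by rw [hclose, abs_of_pos hp]; linarith),
    hclose]

theorem norm_nsmul_eq_mul_norm (hp : p ≠ 0) {n : ℕ} {x : AddCircle p}
    (h : n * ‖x‖ ≤ |p| / 2) : ‖n • x‖ = n * ‖x‖ := by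
  obtain ⟨t, rfl, ht⟩ := exists_coe_eq_and_abs_eq_norm x
  have hnt : |(n : ℝ) * t| = n * ‖(t : AddCircle p)‖ := by rw [abs_mul, Nat.abs_cast, ht]
  rw [← coe_nsmul, nsmul_eq_mul, ← hnt, norm_coe_eq_abs_iff p hp, hnt]
  exact h

theorem norm_nsmul_eq_sub_mul_norm (hp : 0 < p) {n : ℕ} {x : AddCircle p}
    (h₁ : p / 2 ≤ n * ‖x‖) (h₂ : n * ‖x‖ ≤ p) : ‖n • x‖ = p - n * ‖x‖ := by
  obtain ⟨t, rfl, ht⟩ := exists_coe_eq_and_abs_eq_norm x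
  have hnt : |(n : ℝ) * t| = n * ‖(t : AddCircle p)‖ := by rw [abs_mul, Nat.abs_cast, ht]
  rw [← coe_nsmul, nsmul_eq_mul, norm_coe_of_half_period_le_abs hp (hnt ▸ h₁) (hnt ▸ h₂), hnt]

theorem norm_three_nsmul_of_lt_quarter (hp : 0 < p) {x : AddCircle p} (hx : ‖x‖ < p / 4)
    (h3x : ‖(3 : ℕ) • x‖ < p / 4) : ‖(3 : ℕ) • x‖ = 3 * ‖x‖ := by
  have hsixth : ‖x‖ ≤ p / 6 := by
    by_contra! hgt
    have := norm_nsmul_eq_sub_mul_norm (n := 3) (x := x) hp (by push_cast; linarith)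
      (by push_cast; linarith)
    push_cast at this
    linarith
  exact_mod_cast norm_nsmul_eq_mul_norm hp.ne' (n := 3) (x := x)
    (by rw [abs_of_pos hp]; push_cast; linarith)

theorem exists_norm_three_pow_nsmul_ge (hp : 0 < p) {x : AddCircle p} (hx : x ≠ 0) :
    ∃ n : ℕ, p / 4 ≤ ‖(3 ^ n : ℕ) • x‖ := by
  by_contra! hshort
  have hgrow : ∀ n : ℕ, ‖(3 ^ n : ℕ) • x‖ = 3 ^ n * ‖x‖ := by
    intro n
    induction n with
    | zero => simp
    | succ n ih =>
      have hstep : (3 ^ (n + 1) : ℕ) • x = (3 : ℕ) • (3 ^ n : ℕ) • x := by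
        rw [← mul_smul, ← pow_succ']
      rw [hstep, norm_three_nsmul_of_lt_quarter hp (hshort n) (hstep ▸ hshort (n + 1)), ih,
        pow_succ]
      ring
  obtain ⟨n, hn⟩ := pow_unbounded_of_one_lt (p / 4 / ‖x‖) (by norm_num : (1 : ℝ) < 3)
  rw [div_lt_iff₀ (norm_pos_iff.2 hx)] at hn
  linarith [hgrow n ▸ hshort n]

end AddCircle

/-- For any nondegenerate chord `ℓ` of the unit circle (under the tripling
map `σ₃`), there exists `n ≥ 0` such that `‖σ₃ⁿ(ℓ)‖ ≥ 1/4`. -/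
theorem exists_image_length_ge_quarter (a b : UnitAddCircle) (hab : a ≠ b) :
    ∃ n : ℕ, chordLen ((3 ^ n : ℕ) • a) ((3 ^ n : ℕ) • b) ≥ 1/4 := by
  obtain ⟨n, hn⟩ := AddCircle.exists_norm_three_pow_nsmul_ge one_pos (sub_ne_zero.2 hab)
  exact ⟨n, by rwa [chordLen, ← smul_sub]⟩
end

section
/- If a chord ℓ of the circle has length 1/2 and its image chord σ₃(ℓ) does not cross ℓ inside the open unit disk, then σ₃(ℓ) = ℓ; consequently ℓ is one of the two chords {0,1/2} or {1/4,3/4} of ℝ/ℤ. -/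
/-- The chords `{a,b}` and `{c,d}` of `ℝ/ℤ` cross (intersect in the open unit disk) iff
their endpoint pairs strictly interleave on the circle. -/
def ChordsCross (a b c d : UnitAddCircle) : Prop :=
  (∃ x y z w : ℝ, (x : UnitAddCircle) = a ∧ (y : UnitAddCircle) = c ∧
      (z : UnitAddCircle) = b ∧ (w : UnitAddCircle) = d ∧
      x < y ∧ y < z ∧ z < w ∧ w < x + 1) ∨
  (∃ x y z w : ℝ, (x : UnitAddCircle) = a ∧ (y : UnitAddCircle) = d ∧
      (z : UnitAddCircle) = b ∧ (w : UnitAddCircle) = c ∧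
      x < y ∧ y < z ∧ z < w ∧ w < x + 1)


lemma uac_coe_eq_iff {r s : ℝ} :
    (r : UnitAddCircle) = (s : UnitAddCircle) ↔ ∃ n : ℤ, r = s + n := by
  rw [← sub_eq_zero, ← AddCircle.coe_sub, AddCircle.coe_eq_zero_iff]
  constructor
  · rintro ⟨n, hn⟩; exact ⟨n, by simpa [sub_eq_iff_eq_add'] using hn.symm⟩
  · rintro ⟨n, hn⟩; exact ⟨n, by simp [hn]⟩

/-- If a chord `ℓ` of the circle has length `1/2` (a diameter
`{a, a + 1/2}`) and its image chord `σ₃(ℓ)` does not cross `ℓ`, then `σ₃(ℓ) = ℓ`;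
consequently `ℓ` is one of the two chords `{0, 1/2}` or `{1/4, 3/4}` of `ℝ/ℤ`. -/
theorem diameter_invariant_of_not_cross (a b : UnitAddCircle)
    (hdiam : b = a + ((1/2 : ℝ) : UnitAddCircle))
    (hnc : ¬ ChordsCross a b ((3 : ℕ) • a) ((3 : ℕ) • b)) :
    ({(3 : ℕ) • a, (3 : ℕ) • b} : Set UnitAddCircle) = {a, b} ∧
    (({a, b} : Set UnitAddCircle) = {((0 : ℝ) : UnitAddCircle), ((1/2 : ℝ) : UnitAddCircle)} ∨
     ({a, b} : Set UnitAddCircle) = {((1/4 : ℝ) : UnitAddCircle), ((3/4 : ℝ) : UnitAddCircle)}) := by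
  set x : ℝ := (AddCircle.equivIco 1 0 a : ℝ) with hxdef
  have hxmem := (AddCircle.equivIco 1 0 a).2
  have hx0 : (0:ℝ) ≤ x := hxmem.1
  have hx1 : x < 1 := by simpa using hxmem.2
  have hxa : (x : UnitAddCircle) = a := (AddCircle.equivIco 1 0).symm_apply_apply a
  set s : ℝ := (AddCircle.equivIco 1 0 (a + a) : ℝ) with hsdef
  have hsmem := (AddCircle.equivIco 1 0 (a + a)).2
  have hs0 : (0:ℝ) ≤ s := hsmem.1
  have hs1 : s < 1 := by simpa using hsmem.2
  have hs : (s : UnitAddCircle) = a + a := (AddCircle.equivIco 1 0).symm_apply_apply (a + a)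
  have hb : b = ((x + 1/2 : ℝ) : UnitAddCircle) := by
    rw [hdiam, ← hxa, ← AddCircle.coe_add]
  have h3a : (3 : ℕ) • a = ((x + s : ℝ) : UnitAddCircle) := by
    have e1 : (3 : ℕ) • a = a + (a + a) := by
      rw [show (3:ℕ) = 1 + 2 from rfl, add_nsmul, one_nsmul, two_nsmul]
    rw [e1, ← hs, ← hxa, ← AddCircle.coe_add]
  have h3b : (3 : ℕ) • b = ((x + s + 3/2 : ℝ) : UnitAddCircle) := by
    have : (3 : ℕ) • b = (3 : ℕ) • a + (3 : ℕ) • ((1/2 : ℝ) : UnitAddCircle) := by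
      rw [hdiam, smul_add]
    rw [this, h3a, ← AddCircle.coe_nsmul, ← AddCircle.coe_add]
    norm_num
  have h2x : ((x + x : ℝ) : UnitAddCircle) = ((s : ℝ) : UnitAddCircle) := by
    rw [AddCircle.coe_add, hxa, hs]
  rcases lt_trichotomy s (1/2) with hlt | heq | hgt
  · rcases eq_or_lt_of_le hs0 with h0 | h0
    · -- s = 0 : 3a = a, 3b = b
      have h3a' : (3 : ℕ) • a = a := by rw [h3a, ← h0, add_zero, hxa]
      have h3b' : (3 : ℕ) • b = b := by
        rw [h3b, hb]; exact uac_coe_eq_iff.mpr ⟨1, by push_cast; rw [← h0]; ring⟩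
      refine ⟨by rw [h3a', h3b'], Or.inl ?_⟩
      obtain ⟨n, hn⟩ := uac_coe_eq_iff.mp (h2x.trans (by rw [← h0]))
      have hnr : (n : ℝ) = 2 * x := by linarith
      have hn01 : n = 0 ∨ n = 1 := by
        have h1 : (0:ℝ) ≤ (n:ℝ) := by linarith
        have h2 : (n:ℝ) < 2 := by linarith
        have := (by exact_mod_cast h1 : (0:ℤ) ≤ n)
        have := (by exact_mod_cast h2 : n < 2)
        omega
      rcases hn01 with rfl | rfl
      · have hx : x = 0 := by push_cast at hnr; linarith
        rw [← hxa, hb, hx]; norm_num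
      · have hx : x = 1/2 := by push_cast at hnr; linarith
        have h1 : ((x + 1/2 : ℝ) : UnitAddCircle) = ((0:ℝ) : UnitAddCircle) :=
          uac_coe_eq_iff.mpr ⟨1, by rw [hx]; norm_num⟩
        have h2 : (x : UnitAddCircle) = ((1/2:ℝ) : UnitAddCircle) := by rw [hx]
        rw [← hxa, hb, h1, h2, Set.pair_comm]
    · -- 0 < s < 1/2 : crossing
      exact absurd (Or.inl ⟨x, x + s, x + 1/2, x + s + 1/2, hxa, h3a.symm, hb.symm,
        (uac_coe_eq_iff.mpr ⟨-1, by push_cast; ring⟩).trans h3b.symm,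
        by linarith, by linarith, by linarith, by linarith⟩) hnc
  · -- s = 1/2 : 3a = b, 3b = a
    have h3a' : (3 : ℕ) • a = b := by rw [h3a, heq, hb]
    have h3b' : (3 : ℕ) • b = a := by
      rw [h3b, heq, ← hxa]; exact uac_coe_eq_iff.mpr ⟨2, by push_cast; ring⟩
    refine ⟨by rw [h3a', h3b', Set.pair_comm], Or.inr ?_⟩
    obtain ⟨n, hn⟩ := uac_coe_eq_iff.mp (h2x.trans (by rw [heq]))
    have hn01 : n = 0 ∨ n = 1 := by
      have h1 : (-1:ℝ) < (n:ℝ) := by linarith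
      have h2 : (n:ℝ) < 2 := by linarith
      have := (by exact_mod_cast h1 : (-1:ℤ) < n)
      have := (by exact_mod_cast h2 : n < 2)
      omega
    rcases hn01 with rfl | rfl
    · have hx : x = 1/4 := by push_cast at hn; linarith
      rw [← hxa, hb, hx]; norm_num
    · have hx : x = 3/4 := by push_cast at hn; linarith
      have h1 : ((x + 1/2 : ℝ) : UnitAddCircle) = ((1/4:ℝ) : UnitAddCircle) :=
        uac_coe_eq_iff.mpr ⟨1, by rw [hx]; norm_num⟩
      have h2 : (x : UnitAddCircle) = ((3/4:ℝ) : UnitAddCircle) := by rw [hx]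
      rw [← hxa, hb, h1, h2, Set.pair_comm]
  · -- 1/2 < s < 1 : crossing (second pattern)
    exact absurd (Or.inr ⟨x, x + s - 1/2, x + 1/2, x + s, hxa,
      (uac_coe_eq_iff.mpr ⟨-2, by push_cast; ring⟩).trans h3b.symm, hb.symm, h3a.symm,
      by linarith, by linarith, by linarith, by linarith⟩) hnc
end

section
/- Let ℓ = (a,b) be a non-critical chord of ℝ/ℤ under σ₃ that is not a diameter, with the arc (a,b) shorter than (b,a). Then the chords ℓ' = (a + 1/3, b − 1/3) and ℓ'' = (a + 2/3, b − 2/3) satisfy σ₃(ℓ') = σ₃(ℓ'') = σ₃(ℓ), and the three chords ℓ, ℓ', ℓ'' are pairwise disjoint. -/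
/-- Two chords are disjoint: they share no endpoint and do not cross. -/
def ChordsDisjoint (a b c d : UnitAddCircle) : Prop :=
  a ≠ c ∧ a ≠ d ∧ b ≠ c ∧ b ≠ d ∧ ¬ ChordsCross a b c d




private lemma coe_eq_iff' (x y : ℝ) : (x : UnitAddCircle) = y ↔ ∃ k : ℤ, x - y = k := by
  constructor
  · intro h
    rw [QuotientAddGroup.eq_iff_sub_mem] at h
    obtain ⟨k, hk⟩ := AddSubgroup.mem_zmultiples_iff.mp h
    exact ⟨k, by simpa [zsmul_eq_mul] using hk.symm⟩
  · rintro ⟨k, hk⟩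
    rw [QuotientAddGroup.eq_iff_sub_mem]
    exact AddSubgroup.mem_zmultiples_iff.mpr ⟨k, by simp [zsmul_eq_mul, hk]⟩

private lemma no_int {r : ℝ} (h0 : -1 < r) (h1 : r < 1) (hne : r ≠ 0) :
    ¬ ∃ k : ℤ, r = k := by
  rintro ⟨k, rfl⟩
  have hk0 : (-1 : ℤ) < k := by exact_mod_cast h0
  have hk1 : k < 1 := by exact_mod_cast h1
  have : k = 0 := by omega
  simp [this] at hne

private lemma ne_of_gap {x y : ℝ} (h0 : -1 < x - y) (h1 : x - y < 1) (hne : x - y ≠ 0) :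
    (x : UnitAddCircle) ≠ (y : ℝ) := by
  rw [Ne, coe_eq_iff' x y]
  exact no_int h0 h1 hne

private lemma eq_fract {s t : ℝ} (h : ∃ k : ℤ, t - s = k) (h0 : 0 < t) (h1 : t < 1) :
    t = Int.fract s := by
  obtain ⟨k, hk⟩ := h
  have hf : t - Int.fract s = ((k + ⌊s⌋ : ℤ) : ℝ) := by
    rw [Int.fract]; push_cast; linarith
  have hb0 : 0 ≤ Int.fract s := Int.fract_nonneg s
  have hb1 : Int.fract s < 1 := Int.fract_lt_one s
  have h0' : (-1 : ℤ) < k + ⌊s⌋ := by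
    have : (-1 : ℝ) < ((k + ⌊s⌋ : ℤ) : ℝ) := by rw [← hf]; linarith
    exact_mod_cast this
  have h1' : k + ⌊s⌋ < 1 := by
    have : ((k + ⌊s⌋ : ℤ) : ℝ) < 1 := by rw [← hf]; linarith
    exact_mod_cast this
  have : k + ⌊s⌋ = 0 := by omega
  rw [this] at hf; push_cast at hf; linarith

private lemma fract_of_neg {s : ℝ} (h0 : -1 ≤ s) (h1 : s < 0) : Int.fract s = s + 1 := by
  have h := Int.fract_add_intCast s 1
  push_cast at h
  rw [← h]
  exact Int.fract_eq_self.mpr ⟨by linarith, by linarith⟩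

private lemma not_cross (a b c d : ℝ)
    (h1 : ¬ (Int.fract (c - a) < Int.fract (b - a) ∧ Int.fract (b - a) < Int.fract (d - a)))
    (h2 : ¬ (Int.fract (d - a) < Int.fract (b - a) ∧ Int.fract (b - a) < Int.fract (c - a))) :
    ¬ ChordsCross (a : ℝ) ((b : ℝ) : UnitAddCircle) ((c : ℝ) : UnitAddCircle)
      ((d : ℝ) : UnitAddCircle) := by
  rintro (⟨x, y, z, w, hx, hy, hz, hw, hxy, hyz, hzw, hwx⟩ |
          ⟨x, y, z, w, hx, hy, hz, hw, hxy, hyz, hzw, hwx⟩)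
  · obtain ⟨kx, hkx⟩ := (coe_eq_iff' x a).mp hx
    obtain ⟨ky, hky⟩ := (coe_eq_iff' y c).mp hy
    obtain ⟨kz, hkz⟩ := (coe_eq_iff' z b).mp hz
    obtain ⟨kw, hkw⟩ := (coe_eq_iff' w d).mp hw
    have e1 : y - x = Int.fract (c - a) :=
      eq_fract ⟨ky - kx, by push_cast; linarith⟩ (by linarith) (by linarith)
    have e2 : z - x = Int.fract (b - a) :=
      eq_fract ⟨kz - kx, by push_cast; linarith⟩ (by linarith) (by linarith)
    have e3 : w - x = Int.fract (d - a) :=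
      eq_fract ⟨kw - kx, by push_cast; linarith⟩ (by linarith) (by linarith)
    exact h1 ⟨by linarith, by linarith⟩
  · obtain ⟨kx, hkx⟩ := (coe_eq_iff' x a).mp hx
    obtain ⟨ky, hky⟩ := (coe_eq_iff' y d).mp hy
    obtain ⟨kz, hkz⟩ := (coe_eq_iff' z b).mp hz
    obtain ⟨kw, hkw⟩ := (coe_eq_iff' w c).mp hw
    have e1 : y - x = Int.fract (d - a) :=
      eq_fract ⟨ky - kx, by push_cast; linarith⟩ (by linarith) (by linarith)
    have e2 : z - x = Int.fract (b - a) :=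
      eq_fract ⟨kz - kx, by push_cast; linarith⟩ (by linarith) (by linarith)
    have e3 : w - x = Int.fract (c - a) :=
      eq_fract ⟨kw - kx, by push_cast; linarith⟩ (by linarith) (by linarith)
    exact h2 ⟨by linarith, by linarith⟩

private lemma smul_coe_eq (x y : ℝ) (k : ℤ) (hk : 3 * x - 3 * y = k) :
    (3 : ℕ) • ((x : ℝ) : UnitAddCircle) = (3 : ℕ) • ((y : ℝ) : UnitAddCircle) := by
  rw [← AddCircle.coe_nsmul, ← AddCircle.coe_nsmul]
  exact (coe_eq_iff' _ _).mpr ⟨k, by simp only [nsmul_eq_mul]; push_cast; linarith⟩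

/-- Let `ℓ = (a,b)` be a non-critical, non-diameter chord with the arc
`(a,b)` shorter than `(b,a)`. Then `ℓ' = (a + 1/3, b − 1/3)` and `ℓ'' = (a + 2/3, b − 2/3)`
satisfy `σ₃(ℓ') = σ₃(ℓ'') = σ₃(ℓ)`, and `ℓ, ℓ', ℓ''` are pairwise disjoint. -/
theorem sibling_collection (a b : ℝ) (hpos : 0 < b - a) (hshort : b - a < 1/2)
    (hnoncrit : b - a ≠ 1/3) :
    (({(3 : ℕ) • (((a + 1/3 : ℝ)) : UnitAddCircle), (3 : ℕ) • (((b - 1/3 : ℝ)) : UnitAddCircle)} :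
        Set UnitAddCircle) = {(3 : ℕ) • ((a : ℝ) : UnitAddCircle), (3 : ℕ) • ((b : ℝ) : UnitAddCircle)}) ∧
    (({(3 : ℕ) • (((a + 2/3 : ℝ)) : UnitAddCircle), (3 : ℕ) • (((b - 2/3 : ℝ)) : UnitAddCircle)} :
        Set UnitAddCircle) = {(3 : ℕ) • ((a : ℝ) : UnitAddCircle), (3 : ℕ) • ((b : ℝ) : UnitAddCircle)}) ∧
    ChordsDisjoint ((a : ℝ) : UnitAddCircle) ((b : ℝ) : UnitAddCircle)
      (((a + 1/3 : ℝ)) : UnitAddCircle) (((b - 1/3 : ℝ)) : UnitAddCircle) ∧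
    ChordsDisjoint ((a : ℝ) : UnitAddCircle) ((b : ℝ) : UnitAddCircle)
      (((a + 2/3 : ℝ)) : UnitAddCircle) (((b - 2/3 : ℝ)) : UnitAddCircle) ∧
    ChordsDisjoint (((a + 1/3 : ℝ)) : UnitAddCircle) (((b - 1/3 : ℝ)) : UnitAddCircle)
      (((a + 2/3 : ℝ)) : UnitAddCircle) (((b - 2/3 : ℝ)) : UnitAddCircle) := by
  have hne13 : b - a < 1/3 ∨ 1/3 < b - a := lt_or_gt_of_ne hnoncrit
  -- fract computations
  have fba : Int.fract (b - a) = b - a := Int.fract_eq_self.mpr ⟨by linarith, by linarith⟩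
  refine ⟨?_, ?_, ?_, ?_, ?_⟩
  · rw [smul_coe_eq (a + 1/3) a 1 (by ring), smul_coe_eq (b - 1/3) b (-1) (by push_cast; ring)]
  · rw [smul_coe_eq (a + 2/3) a 2 (by push_cast; ring),
        smul_coe_eq (b - 2/3) b (-2) (by push_cast; ring)]
  · refine ⟨ne_of_gap (by linarith) (by linarith) (by norm_num),
      ne_of_gap (by linarith) (by linarith) (by intro h; apply hnoncrit; linarith),
      ne_of_gap (by linarith) (by linarith) (by intro h; apply hnoncrit; linarith),
      ne_of_gap (by linarith) (by linarith) (by norm_num), ?_⟩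
    apply not_cross
    · have f1 : Int.fract (a + 1/3 - a) = 1/3 := by
        rw [show a + 1/3 - a = (1:ℝ)/3 by ring]
        exact Int.fract_eq_self.mpr (by norm_num)
      rcases hne13 with h | h
      · have f2 : Int.fract (b - 1/3 - a) = b - a + 2/3 := by
          rw [show b - 1/3 - a = (b - a - 1/3 : ℝ) by ring,
            fract_of_neg (by linarith) (by linarith)]; ring
        rw [f1, f2, fba]; rintro ⟨h1, h2⟩; linarith
      · have f2 : Int.fract (b - 1/3 - a) = b - a - 1/3 := by
          rw [show b - 1/3 - a = (b - a - 1/3 : ℝ) by ring]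
          exact Int.fract_eq_self.mpr ⟨by linarith, by linarith⟩
        rw [f1, f2, fba]; rintro ⟨h1, h2⟩; linarith
    · have f1 : Int.fract (a + 1/3 - a) = 1/3 := by
        rw [show a + 1/3 - a = (1:ℝ)/3 by ring]
        exact Int.fract_eq_self.mpr (by norm_num)
      rcases hne13 with h | h
      · have f2 : Int.fract (b - 1/3 - a) = b - a + 2/3 := by
          rw [show b - 1/3 - a = (b - a - 1/3 : ℝ) by ring,
            fract_of_neg (by linarith) (by linarith)]; ring
        rw [f1, f2, fba]; rintro ⟨h1, h2⟩; linarith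
      · have f2 : Int.fract (b - 1/3 - a) = b - a - 1/3 := by
          rw [show b - 1/3 - a = (b - a - 1/3 : ℝ) by ring]
          exact Int.fract_eq_self.mpr ⟨by linarith, by linarith⟩
        rw [f1, f2, fba]; rintro ⟨h1, h2⟩; linarith
  · refine ⟨ne_of_gap (by linarith) (by linarith) (by norm_num),
      ne_of_gap (by linarith) (by linarith) (by intro h; linarith),
      ne_of_gap (by linarith) (by linarith) (by intro h; linarith),
      ne_of_gap (by linarith) (by linarith) (by norm_num), ?_⟩
    have f1 : Int.fract (a + 2/3 - a) = 2/3 := by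
      rw [show a + 2/3 - a = (2:ℝ)/3 by ring]
      exact Int.fract_eq_self.mpr (by norm_num)
    have f2 : Int.fract (b - 2/3 - a) = b - a + 1/3 := by
      rw [show b - 2/3 - a = (b - a - 2/3 : ℝ) by ring,
        fract_of_neg (by linarith) (by linarith)]; ring
    apply not_cross <;> rw [f1, f2, fba] <;> rintro ⟨h1, h2⟩ <;> linarith
  · refine ⟨ne_of_gap (by linarith) (by linarith) (by norm_num),
      ne_of_gap (by linarith) (by linarith) (by intro h; linarith),
      ne_of_gap (by linarith) (by linarith) (by intro h; linarith),
      ne_of_gap (by linarith) (by linarith) (by norm_num), ?_⟩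
    have f1 : Int.fract (a + 2/3 - (a + 1/3)) = 1/3 := by
      rw [show a + 2/3 - (a + 1/3) = (1:ℝ)/3 by ring]
      exact Int.fract_eq_self.mpr (by norm_num)
    have f2 : Int.fract (b - 1/3 - (a + 1/3)) = b - a + 1/3 := by
      rw [show b - 1/3 - (a + 1/3) = (b - a - 2/3 : ℝ) by ring,
        fract_of_neg (by linarith) (by linarith)]; ring
    have f3 : Int.fract (b - 2/3 - (a + 1/3)) = b - a := by
      rw [show b - 2/3 - (a + 1/3) = (b - a - 1 : ℝ) by ring,
        fract_of_neg (by linarith) (by linarith)]; ring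
    apply not_cross <;> rw [f1, f2, f3] <;> rintro ⟨h1, h2⟩ <;> linarith
end

section
/- Let m be a chord of the circle and suppose that for all n ≥ 1, ‖σ₃ⁿ(m)‖ ≥ ‖m‖ (m is a shortest chord in its forward orbit) and ‖m‖ < 1/6. Then m never maps under itself: for no n ≥ 1 are both endpoints of σ₃ⁿ(m) contained in the closed shorter arc subtended by m. -/
/-- Let `m = {a, b}` be a chord of length `b − a < 1/6` (with `a < b`
real representatives) that is shortest in its forward orbit: `‖σ₃ⁿ(m)‖ ≥ ‖m‖` for all
`n ≥ 1`. Then `m` never maps under itself nontrivially: if both endpoints of `σ₃ⁿ(m)`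
lie in the closed shorter arc `H(m)` subtended by `m`, then `σ₃ⁿ(m) = m`. -/
theorem shortest_never_under_itself (a b : ℝ) (hab : 0 < b - a) (hshort : b - a < 1/6)
    (hmin : ∀ n : ℕ, 1 ≤ n →
      chordLen ((3 ^ n : ℕ) • ((a : ℝ) : UnitAddCircle)) ((3 ^ n : ℕ) • ((b : ℝ) : UnitAddCircle))
        ≥ b - a) :
    ∀ n : ℕ, 1 ≤ n →
      (3 ^ n : ℕ) • ((a : ℝ) : UnitAddCircle) ∈ (fun r : ℝ => (r : UnitAddCircle)) '' Set.Icc a b →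
      (3 ^ n : ℕ) • ((b : ℝ) : UnitAddCircle) ∈ (fun r : ℝ => (r : UnitAddCircle)) '' Set.Icc a b →
      ({(3 ^ n : ℕ) • ((a : ℝ) : UnitAddCircle), (3 ^ n : ℕ) • ((b : ℝ) : UnitAddCircle)} :
        Set UnitAddCircle) = {((a : ℝ) : UnitAddCircle), ((b : ℝ) : UnitAddCircle)} := by
  intro n hn ha hb
  obtain ⟨x, hx, hxe⟩ := ha
  obtain ⟨y, hy, hye⟩ := hb
  simp only at hxe hye
  have hxy : |x - y| ≤ b - a := by
    rw [abs_sub_le_iff]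
    exact ⟨by linarith [hx.1, hx.2, hy.1, hy.2], by linarith [hx.1, hx.2, hy.1, hy.2]⟩
  have hmin' := hmin n hn
  rw [← hxe, ← hye] at hmin'
  have hnorm : chordLen (↑x) (↑y) = |x - y| := by
    unfold chordLen
    rw [← AddCircle.coe_sub]
    rw [AddCircle.norm_coe_eq_abs_iff (1 : ℝ) one_ne_zero]
    calc |x - y| ≤ b - a := hxy
    _ ≤ |1| / 2 := by rw [abs_one]; linarith
  rw [hnorm] at hmin'
  have heq : |x - y| = b - a := le_antisymm hxy hmin'
  rw [← hxe, ← hye]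
  rcases (abs_eq hab.le).mp heq with h1 | h1
  · have hxb : x = b := by linarith [hx.2, hy.1]
    have hya : y = a := by linarith [hx.2, hy.1]
    rw [hxb, hya, Set.pair_comm]
  · have hxa : x = a := by linarith [hx.1, hy.2]
    have hyb : y = b := by linarith [hx.1, hy.2]
    rw [hxa, hyb]
end
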